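/- arXiv:2309.00982 — 10 statements merged into one kernel-verified Lean document; each statement's English description precedes it below -/
import Mathlib

section
/- Let I be an ideal on ℕ. If there exists an I-almost-disjoint family of cardinality continuum, then there is a rich abstract upper density δ with Z_δ = I. -/
open Set Filter
open scoped Classical

/-- The shift of a set of naturals by an integer `k`, i.e. `(A + k) ∩ ℕ`. -/
def shiftSet (A : Set ℕ) (k : ℤ) : Set ℕ := {n : ℕ | ∃ a ∈ A, (a : ℤ) + k = (n : ℤ)}

/-- An ideal on ℕ. -/
def IsIdeal (I : Set (Set ℕ)) : Prop :=
  (∀ A B : Set ℕ, A ∈ I → B ∈ I → A ∪ B ∈ I) ∧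
  (∀ A B : Set ℕ, A ⊆ B → B ∈ I → A ∈ I) ∧
  (∀ A : Set ℕ, A.Finite → A ∈ I) ∧
  (Set.univ : Set ℕ) ∉ I

/-- A translation invariant ideal on ℕ. -/
def TransInvIdeal (I : Set (Set ℕ)) : Prop :=
  IsIdeal I ∧ ∀ A ∈ I, ∀ k : ℤ, shiftSet A k ∈ I

/-- An abstract upper density on ℕ. -/
def IsAUD (δ : Set ℕ → ℝ) : Prop :=
  (∀ A : Set ℕ, 0 ≤ δ A ∧ δ A ≤ 1) ∧
  δ Set.univ = 1 ∧
  (∀ A : Set ℕ, A.Finite → δ A = 0) ∧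
  (∀ A B : Set ℕ, A ⊆ B → δ A ≤ δ B) ∧
  (∀ A B : Set ℕ, δ (A ∪ B) ≤ δ A + δ B)

/-- A translation invariant density. -/
def TransInvAUD (δ : Set ℕ → ℝ) : Prop := ∀ (A : Set ℕ) (k : ℤ), δ (shiftSet A k) = δ A

/-- A rich density: onto [0,1]. -/
def Rich (δ : Set ℕ → ℝ) : Prop := ∀ r ∈ Set.Icc (0:ℝ) 1, ∃ A : Set ℕ, δ A = r

/-- The family of null sets of a density. -/
def ZSet (δ : Set ℕ → ℝ) : Set (Set ℕ) := {A | δ A = 0}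

/-- An `I`-almost disjoint family. -/
def IsADFamily (I : Set (Set ℕ)) (𝒜 : Set (Set ℕ)) : Prop :=
  (∀ A ∈ 𝒜, A ∉ I) ∧ ∀ A ∈ 𝒜, ∀ B ∈ 𝒜, A ≠ B → A ∩ B ∈ I

/-- An `I`-translation almost disjoint family. -/
def IsTADFamily (I : Set (Set ℕ)) (𝒜 : Set (Set ℕ)) : Prop :=
  (∀ A ∈ 𝒜, A ∉ I) ∧ ∀ A ∈ 𝒜, ∀ B ∈ 𝒜, A ≠ B → ∀ k : ℤ, A ∩ shiftSet B k ∈ I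

/-- A maximal ideal on ℕ. -/
def MaximalIdeal (I : Set (Set ℕ)) : Prop :=
  IsIdeal I ∧ ∀ J : Set (Set ℕ), IsIdeal J → I ⊆ J → I = J

/-- An ideal on a subset `X` of ℕ. -/
def IsIdealOn (X : Set ℕ) (I : Set (Set ℕ)) : Prop :=
  (∀ A ∈ I, A ⊆ X) ∧
  (∀ A B : Set ℕ, A ∈ I → B ∈ I → A ∪ B ∈ I) ∧
  (∀ A B : Set ℕ, A ⊆ B → B ∈ I → A ∈ I) ∧
  (∀ A : Set ℕ, A ⊆ X → A.Finite → A ∈ I) ∧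
  X ∉ I

/-- A maximal ideal on a subset `X` of ℕ. -/
def MaximalIdealOn (X : Set ℕ) (I : Set (Set ℕ)) : Prop :=
  IsIdealOn X I ∧ ∀ A : Set ℕ, A ⊆ X → (A ∈ I ∨ X \ A ∈ I)

/-- The translation-invariant kernel of an ideal. -/
def tIdeal (I : Set (Set ℕ)) : Set (Set ℕ) := {A | ∀ k : ℤ, shiftSet A k ∈ I}

/-- A T-maximal ideal: maximal among translation invariant ideals. -/
def TMaximalIdeal (I : Set (Set ℕ)) : Prop :=
  TransInvIdeal I ∧ ∀ J : Set (Set ℕ), TransInvIdeal J → I ⊆ J → I = J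

theorem stmt3 (I : Set (Set ℕ)) (hI : IsIdeal I) (𝒜 : Set (Set ℕ))
    (h𝒜 : IsADFamily I 𝒜) (hcard : Cardinal.mk 𝒜 = Cardinal.continuum) :
    ∃ δ : Set ℕ → ℝ, IsAUD δ ∧ Rich δ ∧ ZSet δ = I := by
  obtain ⟨hUn, hSub, hFin, hUniv⟩ := hI
  obtain ⟨hPos, hAD⟩ := h𝒜
  -- a function f : Set ℕ → ℝ mapping 𝒜 onto (0,1]
  obtain ⟨f, hfmem, hfsurj⟩ : ∃ f : Set ℕ → ℝ,
      (∀ X ∈ 𝒜, f X ∈ Set.Ioc (0:ℝ) 1) ∧ ∀ r ∈ Set.Ioc (0:ℝ) 1, ∃ X ∈ 𝒜, f X = r := by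
    have h1 : Cardinal.mk 𝒜 = Cardinal.mk (Set.Ioc (0:ℝ) 1) := by
      rw [hcard, Cardinal.mk_Ioc_real one_pos]
    obtain ⟨e⟩ := Cardinal.eq.mp h1
    refine ⟨fun X => if h : X ∈ 𝒜 then (e ⟨X, h⟩ : ℝ) else 0, ?_, ?_⟩
    · intro X hX; simp only [dif_pos hX]; exact (e ⟨X, hX⟩).2
    · intro r hr
      refine ⟨(e.symm ⟨r, hr⟩ : Set ℕ), (e.symm ⟨r, hr⟩).2, ?_⟩
      simp only [dif_pos (e.symm ⟨r, hr⟩).2, Subtype.coe_eta, Equiv.apply_symm_apply]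
  set S : Set ℕ → Set ℝ := fun A => {r | ∃ X ∈ 𝒜, X ∩ A ∉ I ∧ f X = r} with hS
  set s : Set ℕ → ℝ := fun A => sSup (S A) with hs
  set orth : Set ℕ → Prop := fun A => ∃ Y : Set ℕ, Y ⊆ A ∧ Y ∉ I ∧ ∀ X ∈ 𝒜, Y ∩ X ∈ I
    with horth
  set δ : Set ℕ → ℝ := fun A => if A ∈ I then 0 else max (s A) (if orth A then 1 else 0)
    with hδ
  have hSIoc : ∀ A, S A ⊆ Set.Ioc (0:ℝ) 1 := by
    rintro A r ⟨X, hX, -, rfl⟩; exact hfmem X hX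
  have hSbdd : ∀ A, BddAbove (S A) := fun A =>
    ⟨1, fun r hr => (hSIoc A hr).2⟩
  have hs_nonneg : ∀ A, 0 ≤ s A := fun A =>
    Real.sSup_nonneg (fun r hr => le_of_lt (hSIoc A hr).1)
  have hs_le_one : ∀ A, s A ≤ 1 := fun A =>
    Real.sSup_le (fun r hr => (hSIoc A hr).2) zero_le_one
  have hs_mono : ∀ A B : Set ℕ, A ⊆ B → s A ≤ s B := by
    intro A B hAB
    refine Real.sSup_le (fun r hr => ?_) (hs_nonneg B)
    rcases hr with ⟨X, hX, hXA, rfl⟩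
    refine le_csSup (hSbdd B) ⟨X, hX, fun h => hXA (hSub _ _ ?_ h), rfl⟩
    exact Set.inter_subset_inter_right X hAB
  have hs_zero : ∀ A ∈ I, s A = 0 := by
    intro A hA
    have : S A = ∅ := by
      ext r; simp only [Set.mem_empty_iff_false, iff_false]
      rintro ⟨X, hX, hXA, rfl⟩
      exact hXA (hSub _ _ Set.inter_subset_right hA)
    rw [hs]; simp only [this, Real.sSup_empty]
  have hδ_nonneg : ∀ A, 0 ≤ δ A := by
    intro A; rw [hδ]; dsimp only
    split_ifs with h h2
    · exact le_refl 0
    · exact le_max_of_le_left (hs_nonneg A)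
    · exact le_max_of_le_left (hs_nonneg A)
  have hδ_le_one : ∀ A, δ A ≤ 1 := by
    intro A; rw [hδ]; dsimp only
    split_ifs with h h2
    · exact zero_le_one
    · exact max_le (hs_le_one A) le_rfl
    · exact max_le (hs_le_one A) zero_le_one
  have hδI : ∀ A ∈ I, δ A = 0 := by
    intro A hA; rw [hδ]; simp only [if_pos hA]
  have hsδ : ∀ A, s A ≤ δ A := by
    intro A; rw [hδ]; dsimp only
    split_ifs with h h2
    · rw [hs_zero A h]
    · exact le_max_left _ _
    · exact le_max_left _ _
  have hδ_mono : ∀ A B : Set ℕ, A ⊆ B → δ A ≤ δ B := by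
    intro A B hAB
    by_cases hA : A ∈ I
    · rw [hδI A hA]; exact hδ_nonneg B
    · have hB : B ∉ I := fun h => hA (hSub _ _ hAB h)
      rw [hδ]; simp only [if_neg hA, if_neg hB]
      refine max_le_max (hs_mono A B hAB) ?_
      split_ifs with h1 h2
      · exact le_refl 1
      · obtain ⟨Y, hY1, hY2, hY3⟩ := h1
        exact absurd ⟨Y, hY1.trans hAB, hY2, hY3⟩ h2
      · exact zero_le_one
      · exact le_refl 0
  have hδ_pos : ∀ A, A ∉ I → δ A ≠ 0 := by
    intro A hA
    by_cases ho : orth A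
    · rw [hδ]; simp only [if_neg hA, if_pos ho]
      intro h
      have : (1:ℝ) ≤ 0 := h ▸ le_max_right (s A) 1
      linarith
    · -- ¬ orth A : applied to Y = A gives X ∈ 𝒜 with A ∩ X ∉ I
      have ho' : ¬ ∃ Y : Set ℕ, Y ⊆ A ∧ Y ∉ I ∧ ∀ X ∈ 𝒜, Y ∩ X ∈ I := ho
      have hA' : ¬ ∀ X ∈ 𝒜, A ∩ X ∈ I := fun h => ho' ⟨A, le_refl A, hA, h⟩
      push_neg at hA'
      obtain ⟨X, hX, hXA⟩ := hA'
      have hfX : f X ∈ S A := ⟨X, hX, by rwa [Set.inter_comm], rfl⟩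
      have h1 : f X ≤ s A := le_csSup (hSbdd A) hfX
      have h2 : 0 < f X := (hfmem X hX).1
      have : 0 < δ A := lt_of_lt_of_le (lt_of_lt_of_le h2 h1) (hsδ A)
      exact ne_of_gt this
  have hδfX : ∀ X ∈ 𝒜, δ X = f X := by
    intro X hX
    have hXI : X ∉ I := hPos X hX
    have horthX : ¬ orth X := by
      rintro ⟨Y, hY1, hY2, hY3⟩
      have : Y ∩ X = Y := Set.inter_eq_left.mpr hY1
      exact hY2 (this ▸ hY3 X hX)
    have hSX : S X = {f X} := by
      ext r
      constructor
      · rintro ⟨X', hX', hX'X, rfl⟩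
        by_cases h : X' = X
        · rw [h]; rfl
        · exact absurd (hAD X' hX' X hX h) hX'X
      · rintro rfl
        exact ⟨X, hX, by rwa [Set.inter_self], rfl⟩
    rw [hδ]; simp only [if_neg hXI, if_neg horthX]
    rw [hs]; simp only [hSX, csSup_singleton]
    exact max_eq_left (le_of_lt (hfmem X hX).1)
  refine ⟨δ, ⟨fun A => ⟨hδ_nonneg A, hδ_le_one A⟩, ?_, fun A hA => hδI A (hFin A hA),
      hδ_mono, ?_⟩, ?_, ?_⟩
  · -- δ univ = 1
    obtain ⟨X, hX, hfX⟩ := hfsurj 1 ⟨one_pos, le_refl 1⟩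
    have h1 : δ X = 1 := by rw [hδfX X hX, hfX]
    have := hδ_mono X Set.univ (Set.subset_univ X)
    have := hδ_le_one Set.univ
    linarith
  · -- subadditivity
    intro A B
    by_cases hAB : A ∪ B ∈ I
    · rw [hδI _ hAB]; exact add_nonneg (hδ_nonneg A) (hδ_nonneg B)
    · rw [hδ]; simp only [if_neg hAB]
      by_cases ho : orth (A ∪ B)
      · -- some orthogonal Y ⊆ A ∪ B, then δ A or δ B ≥ 1
        obtain ⟨Y, hY1, hY2, hY3⟩ := ho
        have hone : (1:ℝ) ≤ δ A + δ B := by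
          have hcase : Y ∩ A ∉ I ∨ Y ∩ B ∉ I := by
            by_contra h
            push_neg at h
            have : Y ∩ A ∪ Y ∩ B ∈ I := hUn _ _ h.1 h.2
            rw [← Set.inter_union_distrib_left, Set.inter_eq_left.mpr hY1] at this
            exact hY2 this
          rcases hcase with h | h
          · have hAI : A ∉ I := fun hh => h (hSub _ _ Set.inter_subset_right hh)
            have : δ A ≥ 1 := by
              rw [hδ]; simp only [if_neg hAI]
              have : orth A := ⟨Y ∩ A, Set.inter_subset_right, h,
                fun X hX => hSub _ _
                  (Set.inter_subset_inter_left X Set.inter_subset_left) (hY3 X hX)⟩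
              simp only [if_pos this]
              exact le_max_right _ _
            linarith [hδ_nonneg B]
          · have hBI : B ∉ I := fun hh => h (hSub _ _ Set.inter_subset_right hh)
            have : δ B ≥ 1 := by
              rw [hδ]; simp only [if_neg hBI]
              have : orth B := ⟨Y ∩ B, Set.inter_subset_right, h,
                fun X hX => hSub _ _
                  (Set.inter_subset_inter_left X Set.inter_subset_left) (hY3 X hX)⟩
              simp only [if_pos this]
              exact le_max_right _ _
            linarith [hδ_nonneg A]
        calc max (s (A ∪ B)) (if orth (A ∪ B) then 1 else 0)
            ≤ 1 := max_le (hs_le_one _) (by split_ifs <;> norm_num)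
          _ ≤ δ A + δ B := hone
      · simp only [if_neg ho, max_eq_left (hs_nonneg _)]
        have hsum : s (A ∪ B) ≤ s A + s B := by
          refine Real.sSup_le (fun r hr => ?_)
            (add_nonneg (hs_nonneg A) (hs_nonneg B))
          rcases hr with ⟨X, hX, hXAB, rfl⟩
          have hcase : X ∩ A ∉ I ∨ X ∩ B ∉ I := by
            by_contra h
            push_neg at h
            have : X ∩ A ∪ X ∩ B ∈ I := hUn _ _ h.1 h.2
            rw [← Set.inter_union_distrib_left] at this
            exact hXAB this
          rcases hcase with h | h
          · have : f X ≤ s A := le_csSup (hSbdd A) ⟨X, hX, h, rfl⟩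
            linarith [hs_nonneg B]
          · have : f X ≤ s B := le_csSup (hSbdd B) ⟨X, hX, h, rfl⟩
            linarith [hs_nonneg A]
        calc s (A ∪ B) ≤ s A + s B := hsum
          _ ≤ δ A + δ B := add_le_add (hsδ A) (hsδ B)
  · -- Rich
    intro r hr
    rcases eq_or_lt_of_le hr.1 with h0 | h0
    · exact ⟨∅, by rw [hδI ∅ (hFin ∅ Set.finite_empty), h0]⟩
    · obtain ⟨X, hX, hfX⟩ := hfsurj r ⟨h0, hr.2⟩
      exact ⟨X, by rw [hδfX X hX, hfX]⟩
  · -- ZSet δ = I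
    ext A
    simp only [ZSet, Set.mem_setOf_eq]
    constructor
    · intro h
      by_contra hA
      exact hδ_pos A hA h
    · exact hδI A
end

section
/- Let I be an ideal on ℕ and suppose {P_n : n ∈ ℕ} is an ω-partition of ℕ with respect to I. Then the function δ(A) = Σ_{n : A ∩ P_n ∉ I} 2^{-n} is a rich abstract upper density with Z_δ = I. -/
open Set Filter
open scoped Classical

lemma half_summable : Summable (fun n : ℕ => ((1:ℝ)/2)^(n+1)) := by
  have := summable_geometric_two.mul_right (1/2 : ℝ)
  apply this.congr
  intro n; rw [pow_succ]

lemma aux_summable (f : ℕ → ℝ) (h0 : ∀ n, 0 ≤ f n) (h1 : ∀ n, f n ≤ ((1:ℝ)/2)^(n+1)) :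
    Summable f := Summable.of_nonneg_of_le h0 h1 half_summable

lemma aux_tsum_one : ∑' n : ℕ, ((1:ℝ)/2)^(n+1) = 1 := by
  have : ∑' n : ℕ, ((1:ℝ)/2)^n * (1/2) = 2 * (1/2) := by
    rw [tsum_mul_right, tsum_geometric_two]
  rw [show (fun n : ℕ => ((1:ℝ)/2)^(n+1)) = fun n : ℕ => ((1:ℝ)/2)^n * (1/2) by
    funext n; rw [pow_succ]]
  linarith

lemma exists_binary (r : ℝ) (h0 : 0 ≤ r) (h1 : r ≤ 1) :
    ∃ S : Set ℕ, HasSum (fun n : ℕ => if n ∈ S then ((1:ℝ)/2)^(n+1) else 0) r := by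
  classical
  set p : ℕ → ℝ := fun n => Nat.rec 0
    (fun n pn => if pn + (1/2)^(n+1) ≤ r then pn + (1/2)^(n+1) else pn) n with hp
  have hp0 : p 0 = 0 := rfl
  have hps : ∀ n, p (n+1) = if p n + (1/2)^(n+1) ≤ r then p n + (1/2)^(n+1) else p n :=
    fun n => rfl
  refine ⟨{n | p n + (1/2)^(n+1) ≤ r}, ?_⟩
  set f : ℕ → ℝ := fun n => if n ∈ {n | p n + (1/2)^(n+1) ≤ r} then ((1:ℝ)/2)^(n+1) else 0
    with hf
  have hfd : ∀ n, f n = if p n + (1/2)^(n+1) ≤ r then ((1:ℝ)/2)^(n+1) else 0 := fun n => rfl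
  have hpart : ∀ n, ∑ i ∈ Finset.range n, f i = p n := by
    intro n
    induction n with
    | zero => simp [hp0]
    | succ n ih =>
      rw [Finset.sum_range_succ, ih, hps, hfd]
      by_cases h : p n + (1/2)^(n+1) ≤ r
      · rw [if_pos h, if_pos h]
      · rw [if_neg h, if_neg h, add_zero]
  have hle : ∀ n, p n ≤ r := by
    intro n
    induction n with
    | zero => rw [hp0]; exact h0
    | succ n ih =>
      rw [hps]
      by_cases h : p n + (1/2)^(n+1) ≤ r
      · rw [if_pos h]; exact h
      · rw [if_neg h]; exact ih
  have hge : ∀ n, r ≤ p n + (1/2)^n := by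
    intro n
    induction n with
    | zero => rw [hp0]; simpa using h1
    | succ n ih =>
      rw [hps]
      by_cases h : p n + (1/2)^(n+1) ≤ r
      · rw [if_pos h]
        have e : (1/2:ℝ)^n = (1/2)^(n+1) + (1/2)^(n+1) := by ring
        linarith [ih]
      · rw [if_neg h]; push_neg at h; linarith
  have hnonneg : ∀ n, 0 ≤ f n := by
    intro n; rw [hfd]
    by_cases h : p n + (1/2)^(n+1) ≤ r
    · rw [if_pos h]; positivity
    · rw [if_neg h]
  have hub : ∀ n, f n ≤ ((1:ℝ)/2)^(n+1) := by
    intro n; rw [hfd]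
    by_cases h : p n + (1/2)^(n+1) ≤ r
    · rw [if_pos h]
    · rw [if_neg h]; positivity
  have hsum : Summable f := aux_summable f hnonneg hub
  have htend : Tendsto p atTop (nhds r) := by
    have h2 : Tendsto (fun n : ℕ => r - (1/2:ℝ)^n) atTop (nhds r) := by
      have := tendsto_pow_atTop_nhds_zero_of_lt_one (by norm_num : (0:ℝ) ≤ 1/2)
        (by norm_num : (1/2:ℝ) < 1)
      simpa using (tendsto_const_nhds.sub this)
    exact tendsto_of_tendsto_of_tendsto_of_le_of_le h2 tendsto_const_nhds
      (fun n => by linarith [hge n]) hle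
  have ht2 : Tendsto (fun n => ∑ i ∈ Finset.range n, f i) atTop (nhds r) := by
    simpa [funext hpart] using htend
  have := hsum.hasSum.tendsto_sum_nat
  have heq : ∑' n, f n = r := tendsto_nhds_unique this ht2
  exact heq ▸ hsum.hasSum

theorem stmt5 (I : Set (Set ℕ)) (hI : IsIdeal I) (P : ℕ → Set ℕ)
    (hdisj : Pairwise (Function.onFun Disjoint P))
    (hcover : (⋃ n, P n) = Set.univ)
    (hpos : ∀ n, P n ∉ I)
    (homega : ∀ A : Set ℕ, (∀ n, A ∩ P n ∈ I) → A ∈ I) :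
    IsAUD (fun A => ∑' n : ℕ, if A ∩ P n ∈ I then (0:ℝ) else (1/2)^(n+1)) ∧
    Rich (fun A => ∑' n : ℕ, if A ∩ P n ∈ I then (0:ℝ) else (1/2)^(n+1)) ∧
    ZSet (fun A => ∑' n : ℕ, if A ∩ P n ∈ I then (0:ℝ) else (1/2)^(n+1)) = I := by
  classical
  obtain ⟨hunion, hdown, hfin, huniv⟩ := hI
  set g : Set ℕ → ℕ → ℝ := fun A n => if A ∩ P n ∈ I then (0:ℝ) else (1/2)^(n+1) with hg
  have hgd : ∀ A n, g A n = if A ∩ P n ∈ I then (0:ℝ) else (1/2)^(n+1) := fun A n => rfl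
  have hgnn : ∀ A n, 0 ≤ g A n := by
    intro A n; rw [hgd]
    by_cases h : A ∩ P n ∈ I
    · rw [if_pos h]
    · rw [if_neg h]; positivity
  have hgub : ∀ A n, g A n ≤ ((1:ℝ)/2)^(n+1) := by
    intro A n; rw [hgd]
    by_cases h : A ∩ P n ∈ I
    · rw [if_pos h]; positivity
    · rw [if_neg h]
  have hsum : ∀ A, Summable (g A) := fun A => aux_summable _ (hgnn A) (hgub A)
  have hnn : ∀ A, 0 ≤ ∑' n, g A n := fun A => tsum_nonneg (hgnn A)
  have hub : ∀ A, ∑' n, g A n ≤ 1 := by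
    intro A
    calc ∑' n, g A n ≤ ∑' n : ℕ, ((1:ℝ)/2)^(n+1) :=
          Summable.tsum_le_tsum (hgub A) (hsum A) half_summable
      _ = 1 := aux_tsum_one
  have hmono : ∀ A B : Set ℕ, A ⊆ B → ∑' n, g A n ≤ ∑' n, g B n := by
    intro A B hAB
    refine Summable.tsum_le_tsum (fun n => ?_) (hsum A) (hsum B)
    rw [hgd, hgd]
    by_cases h : B ∩ P n ∈ I
    · have : A ∩ P n ∈ I := hdown _ _ (inter_subset_inter_left _ hAB) h
      rw [if_pos h, if_pos this]
    · by_cases h' : A ∩ P n ∈ I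
      · rw [if_pos h', if_neg h]; positivity
      · rw [if_neg h', if_neg h]
  refine ⟨⟨fun A => ⟨hnn A, hub A⟩, ?_, ?_, hmono, ?_⟩, ?_, ?_⟩
  · -- δ univ = 1
    show ∑' n, g univ n = 1
    have : ∀ n, g univ n = ((1:ℝ)/2)^(n+1) := by
      intro n; rw [hgd, univ_inter, if_neg (hpos n)]
    rw [show (fun n => g univ n) = fun n : ℕ => ((1:ℝ)/2)^(n+1) from funext this]
    exact aux_tsum_one
  · -- finite sets
    intro A hA
    show ∑' n, g A n = 0
    have : ∀ n, g A n = 0 := by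
      intro n; rw [hgd, if_pos (hfin _ (hA.inter_of_left _))]
    rw [show (fun n => g A n) = fun _ => (0:ℝ) from funext this]
    exact tsum_zero
  · -- subadditive
    intro A B
    show ∑' n, g (A ∪ B) n ≤ ∑' n, g A n + ∑' n, g B n
    calc ∑' n, g (A ∪ B) n ≤ ∑' n, (g A n + g B n) := by
          refine Summable.tsum_le_tsum (fun n => ?_) (hsum _) ((hsum A).add (hsum B))
          by_cases hA : A ∩ P n ∈ I
          · by_cases hB : B ∩ P n ∈ I
            · have hu : (A ∪ B) ∩ P n ∈ I := by
                rw [union_inter_distrib_right]; exact hunion _ _ hA hB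
              rw [hgd, hgd, hgd, if_pos hu, if_pos hA, if_pos hB, add_zero]
            · rw [hgd A, if_pos hA, zero_add]
              calc g (A ∪ B) n ≤ ((1:ℝ)/2)^(n+1) := hgub _ n
                _ = g B n := by rw [hgd, if_neg hB]
          · calc g (A ∪ B) n ≤ ((1:ℝ)/2)^(n+1) := hgub _ n
              _ ≤ g A n + g B n := by
                  rw [hgd A, if_neg hA]
                  have := hgnn B n; linarith
      _ = ∑' n, g A n + ∑' n, g B n := Summable.tsum_add (hsum A) (hsum B)
  · -- Rich
    intro r hr
    obtain ⟨S, hS⟩ := exists_binary r hr.1 hr.2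
    refine ⟨⋃ n ∈ S, P n, ?_⟩
    show ∑' n, g (⋃ m ∈ S, P m) n = r
    have hterm : ∀ n, g (⋃ m ∈ S, P m) n = if n ∈ S then ((1:ℝ)/2)^(n+1) else 0 := by
      intro n; rw [hgd]
      by_cases hn : n ∈ S
      · rw [if_pos hn, if_neg]
        intro hmem
        have hsub : P n ⊆ (⋃ m ∈ S, P m) ∩ P n :=
          fun x hx => ⟨mem_iUnion₂.2 ⟨n, hn, hx⟩, hx⟩
        exact hpos n (hdown _ _ hsub hmem)
      · rw [if_neg hn, if_pos]
        have he : (⋃ m ∈ S, P m) ∩ P n = ∅ := by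
          ext x
          simp only [mem_inter_iff, mem_iUnion, mem_empty_iff_false, iff_false, not_and]
          rintro ⟨m, hm, hxm⟩ hxn
          have hmn : m ≠ n := fun h => hn (h ▸ hm)
          exact Set.disjoint_left.mp (hdisj hmn) hxm hxn
        rw [he]; exact hfin _ finite_empty
    rw [show (fun n => g (⋃ m ∈ S, P m) n) = fun n => if n ∈ S then ((1:ℝ)/2)^(n+1) else 0
      from funext hterm]
    exact hS.tsum_eq
  · -- ZSet = I
    ext A
    simp only [ZSet, mem_setOf_eq]
    constructor
    · intro hz
      have hz' : ∑' n, g A n = 0 := hz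
      refine homega A (fun n => ?_)
      by_contra hmem
      have h1 : g A n ≤ 0 := hz' ▸ Summable.le_tsum (hsum A) n (fun m _ => hgnn A m)
      have h2 : g A n = (1/2:ℝ)^(n+1) := by rw [hgd, if_neg hmem]
      rw [h2] at h1
      have : (0:ℝ) < (1/2)^(n+1) := by positivity
      linarith
    · intro hA
      show ∑' n, g A n = 0
      have : ∀ n, g A n = 0 := fun n =>
        by rw [hgd, if_pos (hdown _ _ (inter_subset_left) hA)]
      rw [show (fun n => g A n) = fun _ => (0:ℝ) from funext this]
      exact tsum_zero
end

section
/- Let {P_n : n ∈ ℕ} be a partition of ℕ into infinite sets and for each n let I_n be a maximal ideal on P_n. Then I = {A ⊆ ℕ : A ∩ P_n ∈ I_n for every n} is an ideal on ℕ, and every I-almost-disjoint family is countable; in particular there is no I-AD family of cardinality continuum. -/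
open Set Filter
open scoped Classical

theorem stmt6 (P : ℕ → Set ℕ)
    (hdisj : Pairwise (Function.onFun Disjoint P))
    (hcover : (⋃ n, P n) = Set.univ)
    (hinf : ∀ n, (P n).Infinite)
    (In : ℕ → Set (Set ℕ)) (hIn : ∀ n, MaximalIdealOn (P n) (In n)) :
    IsIdeal {A : Set ℕ | ∀ n, A ∩ P n ∈ In n} ∧
    (∀ 𝒜 : Set (Set ℕ), IsADFamily {A : Set ℕ | ∀ n, A ∩ P n ∈ In n} 𝒜 → 𝒜.Countable) ∧
    ¬ ∃ 𝒜 : Set (Set ℕ), IsADFamily {A : Set ℕ | ∀ n, A ∩ P n ∈ In n} 𝒜 ∧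
        Cardinal.mk 𝒜 = Cardinal.continuum := by
  set I : Set (Set ℕ) := {A : Set ℕ | ∀ n, A ∩ P n ∈ In n} with hI
  have hIdeal : IsIdeal I := by
    refine ⟨?_, ?_, ?_, ?_⟩
    · intro A B hA hB n
      rw [Set.union_inter_distrib_right]
      exact (hIn n).1.2.1 _ _ (hA n) (hB n)
    · intro A B hAB hB n
      exact (hIn n).1.2.2.1 _ _ (Set.inter_subset_inter_left _ hAB) (hB n)
    · intro A hA n
      exact (hIn n).1.2.2.2.1 _ Set.inter_subset_right (hA.inter_of_left _)
    · intro h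
      have := h 0
      rw [Set.univ_inter] at this
      exact (hIn 0).1.2.2.2.2 this
  have hCount : ∀ 𝒜 : Set (Set ℕ), IsADFamily I 𝒜 → 𝒜.Countable := by
    intro 𝒜 ⟨hnotI, hAD⟩
    have key : ∀ A : 𝒜, ∃ n, (A : Set ℕ) ∩ P n ∉ In n := by
      intro ⟨A, hA⟩
      by_contra h
      push_neg at h
      exact hnotI A hA h
    choose f hf using key
    have hinj : Function.Injective f := by
      intro A B hAB
      by_contra hne
      have hne' : (A : Set ℕ) ≠ (B : Set ℕ) := fun h => hne (Subtype.ext h)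
      set n := f A with hn
      have hinter : (A : Set ℕ) ∩ B ∈ I := hAD A A.2 B B.2 hne'
      have h1 : P n \ ((A : Set ℕ) ∩ P n) ∈ In n := by
        rcases (hIn n).2 ((A : Set ℕ) ∩ P n) Set.inter_subset_right with h | h
        · exact absurd h (hf A)
        · exact h
      have h2 : P n \ ((B : Set ℕ) ∩ P n) ∈ In n := by
        rcases (hIn n).2 ((B : Set ℕ) ∩ P n) Set.inter_subset_right with h | h
        · exact absurd (hAB ▸ h) (hf B)
        · exact h
      have h3 : ((A : Set ℕ) ∩ B) ∩ P n ∈ In n := hinter n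
      have hsub : P n ⊆ (((A : Set ℕ) ∩ B) ∩ P n) ∪
          ((P n \ ((A : Set ℕ) ∩ P n)) ∪ (P n \ ((B : Set ℕ) ∩ P n))) := by
        intro x hx
        by_cases hxa : x ∈ (A : Set ℕ)
        · by_cases hxb : x ∈ (B : Set ℕ)
          · exact Or.inl ⟨⟨hxa, hxb⟩, hx⟩
          · exact Or.inr (Or.inr ⟨hx, fun h => hxb h.1⟩)
        · exact Or.inr (Or.inl ⟨hx, fun h => hxa h.1⟩)
      have : P n ∈ In n :=
        (hIn n).1.2.2.1 _ _ hsub ((hIn n).1.2.1 _ _ h3 ((hIn n).1.2.1 _ _ h1 h2))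
      exact (hIn n).1.2.2.2.2 this
    exact Set.countable_iff_exists_injective.mpr ⟨f, hinj⟩
  refine ⟨hIdeal, hCount, ?_⟩
  rintro ⟨𝒜, hAD, hcard⟩
  have hc : 𝒜.Countable := hCount 𝒜 hAD
  have : Cardinal.mk 𝒜 ≤ Cardinal.aleph0 := Cardinal.mk_le_aleph0_iff.mpr hc.to_subtype
  rw [hcard] at this
  exact absurd this (not_le.mpr Cardinal.aleph0_lt_continuum)
end

section
/- Let {P_n : n ∈ ℕ} be a partition of ℕ into infinite sets and for each n let I_n be a maximal ideal on P_n. Then I = {A ⊆ ℕ : A ∩ P_n ∈ I_n for all but finitely many n} is an ideal on ℕ, and there exists an I-almost-disjoint family of cardinality continuum. -/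
open Set Filter
open scoped Classical

/-!
Each `In n` contains `∅` but not `P n`, so the blocks on which `⋃ m ∈ S, P m` is not
`In`-small are exactly the `P n` with `n ∈ S`. Hence `S ↦ ⋃ m ∈ S, P m` is injective and
carries almost disjoint families on ℕ to `I`-almost-disjoint ones. An almost disjoint family
of size continuum on ℕ is given by the branches of the binary tree, each node (a finite
prefix of some `f : ℕ → Bool`) coded as a natural number.
-/

noncomputable def prefixCode (f : ℕ → Bool) (n : ℕ) : ℕ :=
  Encodable.encode (List.ofFn fun i : Fin n => f i)

lemma prefixCode_eq_prefixCode {f g : ℕ → Bool} {n m : ℕ} (h : prefixCode f n = prefixCode g m) :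
    n = m ∧ ∀ i < n, f i = g i := by
  have hl : (List.ofFn fun i : Fin n => f i) = List.ofFn fun i : Fin m => g i :=
    Encodable.encode_injective h
  obtain rfl : n = m := by simpa using congrArg List.length hl
  refine ⟨rfl, fun i hi => ?_⟩
  simpa [List.getElem?_ofFn, hi] using congrArg (·[i]?) hl

lemma prefixCode_injective (f : ℕ → Bool) : Function.Injective (prefixCode f) :=
  fun _ _ h => (prefixCode_eq_prefixCode h).1

noncomputable def branch (f : ℕ → Bool) : Set ℕ := range (prefixCode f)

lemma branch_infinite (f : ℕ → Bool) : (branch f).Infinite :=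
  infinite_range_of_injective (prefixCode_injective f)

lemma branch_inter_branch_finite {f g : ℕ → Bool} (hfg : f ≠ g) :
    (branch f ∩ branch g).Finite := by
  obtain ⟨N, hN⟩ : ∃ N, f N ≠ g N := Function.ne_iff.mp hfg
  refine ((finite_Iic N).image (prefixCode f)).subset ?_
  rintro _ ⟨⟨n, rfl⟩, ⟨m, hm⟩⟩
  obtain ⟨-, hagree⟩ := prefixCode_eq_prefixCode hm.symm
  exact ⟨n, mem_Iic.mpr (not_lt.mp fun hn => hN (hagree N hn)), rfl⟩

lemma branch_injective : Function.Injective branch := by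
  intro f g h
  funext n
  obtain ⟨m, hm⟩ : prefixCode f (n + 1) ∈ branch g := h ▸ mem_range_self (n + 1)
  exact (prefixCode_eq_prefixCode hm.symm).2 n n.lt_succ_self

theorem exists_isADFamily_finite_mk_eq_continuum :
    ∃ 𝒜 : Set (Set ℕ), IsADFamily {A | A.Finite} 𝒜 ∧ Cardinal.mk 𝒜 = Cardinal.continuum := by
  refine ⟨range branch, ⟨?_, ?_⟩, ?_⟩
  · rintro _ ⟨f, rfl⟩
    exact branch_infinite f
  · rintro _ ⟨f, rfl⟩ _ ⟨g, rfl⟩ hfg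
    exact branch_inter_branch_finite (ne_of_apply_ne branch hfg)
  · rw [Cardinal.mk_range_eq _ branch_injective, Cardinal.mk_arrow]
    simp [Cardinal.two_power_aleph0]

section PositiveBlocks

variable {P : ℕ → Set ℕ} {In : ℕ → Set (Set ℕ)}

variable (P In) in
def positiveBlocks (A : Set ℕ) : Set ℕ := {n | A ∩ P n ∉ In n}

lemma positiveBlocks_mono (hIn : ∀ n, IsIdealOn (P n) (In n)) {A B : Set ℕ} (hAB : A ⊆ B) :
    positiveBlocks P In A ⊆ positiveBlocks P In B :=
  fun n hA hB => hA ((hIn n).2.2.1 _ _ (inter_subset_inter_left _ hAB) hB)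

lemma positiveBlocks_union_subset (hIn : ∀ n, IsIdealOn (P n) (In n)) (A B : Set ℕ) :
    positiveBlocks P In (A ∪ B) ⊆ positiveBlocks P In A ∪ positiveBlocks P In B := by
  intro n hAB
  by_contra hn
  obtain ⟨hA, hB⟩ := not_or.mp hn
  change (A ∪ B) ∩ P n ∉ In n at hAB
  rw [union_inter_distrib_right] at hAB
  exact hAB ((hIn n).2.1 _ _ (not_not.mp hA) (not_not.mp hB))

lemma positiveBlocks_inter_subset (hIn : ∀ n, IsIdealOn (P n) (In n)) (A B : Set ℕ) :
    positiveBlocks P In (A ∩ B) ⊆ positiveBlocks P In A ∩ positiveBlocks P In B :=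
  subset_inter (positiveBlocks_mono hIn inter_subset_left)
    (positiveBlocks_mono hIn inter_subset_right)

lemma positiveBlocks_eq_empty_of_finite (hIn : ∀ n, IsIdealOn (P n) (In n)) {A : Set ℕ}
    (hA : A.Finite) : positiveBlocks P In A = ∅ :=
  eq_empty_of_forall_notMem fun n hn =>
    hn ((hIn n).2.2.2.1 _ inter_subset_right (hA.subset inter_subset_left))

lemma positiveBlocks_univ (hIn : ∀ n, IsIdealOn (P n) (In n)) : positiveBlocks P In univ = univ :=
  eq_univ_of_forall fun n => by simpa [positiveBlocks] using (hIn n).2.2.2.2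

lemma isIdeal_setOf_positiveBlocks_finite (hIn : ∀ n, IsIdealOn (P n) (In n)) :
    IsIdeal {A | (positiveBlocks P In A).Finite} := by
  refine ⟨fun A B hA hB => ?_, fun A B hAB hB => ?_, fun A hA => ?_, fun huniv => ?_⟩
  · exact (hA.union hB).subset (positiveBlocks_union_subset hIn A B)
  · exact hB.subset (positiveBlocks_mono hIn hAB)
  · simp [positiveBlocks_eq_empty_of_finite hIn hA]
  · exact infinite_univ (α := ℕ) (positiveBlocks_univ hIn ▸ huniv)

lemma positiveBlocks_biUnion (hdisj : Pairwise (Function.onFun Disjoint P))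
    (hIn : ∀ n, IsIdealOn (P n) (In n)) (S : Set ℕ) :
    positiveBlocks P In (⋃ m ∈ S, P m) = S := by
  ext n
  by_cases hn : n ∈ S
  · have : (⋃ m ∈ S, P m) ∩ P n = P n := inter_eq_right.mpr (subset_biUnion_of_mem hn)
    simpa [positiveBlocks, this, hn] using (hIn n).2.2.2.2
  · have : (⋃ m ∈ S, P m) ∩ P n = ∅ := by
      simp only [iUnion_inter, iUnion_eq_empty]
      exact fun m hm => (hdisj (ne_of_mem_of_not_mem hm hn)).inter_eq
    simpa [positiveBlocks, this, hn] using (hIn n).2.2.2.1 ∅ (empty_subset _) finite_empty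

theorem isADFamily_image_biUnion (hdisj : Pairwise (Function.onFun Disjoint P))
    (hIn : ∀ n, IsIdealOn (P n) (In n)) {𝒜 : Set (Set ℕ)} (h𝒜 : IsADFamily {A | A.Finite} 𝒜) :
    IsADFamily {A | (positiveBlocks P In A).Finite} ((fun S => ⋃ m ∈ S, P m) '' 𝒜) := by
  refine ⟨?_, ?_⟩
  · rintro _ ⟨S, hS, rfl⟩
    simpa [positiveBlocks_biUnion hdisj hIn] using h𝒜.1 S hS
  · rintro _ ⟨S, hS, rfl⟩ _ ⟨T, hT, rfl⟩ hST
    refine (h𝒜.2 S hS T hT fun h => hST (h ▸ rfl)).subset ?_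
    simpa only [positiveBlocks_biUnion hdisj hIn] using positiveBlocks_inter_subset hIn
      (⋃ m ∈ S, P m) (⋃ m ∈ T, P m)

lemma biUnion_injective (hdisj : Pairwise (Function.onFun Disjoint P))
    (hIn : ∀ n, IsIdealOn (P n) (In n)) : Function.Injective fun S : Set ℕ => ⋃ m ∈ S, P m :=
  fun S T h => by
    simpa only [positiveBlocks_biUnion hdisj hIn] using congrArg (positiveBlocks P In) h

end PositiveBlocks

theorem stmt7_general (P : ℕ → Set ℕ)
    (hdisj : Pairwise (Function.onFun Disjoint P))
    (In : ℕ → Set (Set ℕ)) (hIn : ∀ n, MaximalIdealOn (P n) (In n)) :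
    IsIdeal {A : Set ℕ | {n : ℕ | A ∩ P n ∉ In n}.Finite} ∧
    ∃ 𝒜 : Set (Set ℕ), IsADFamily {A : Set ℕ | {n : ℕ | A ∩ P n ∉ In n}.Finite} 𝒜 ∧
      Cardinal.mk 𝒜 = Cardinal.continuum := by
  have hIdeal : ∀ n, IsIdealOn (P n) (In n) := fun n => (hIn n).1
  obtain ⟨𝒜, h𝒜, hcard⟩ := exists_isADFamily_finite_mk_eq_continuum
  refine ⟨isIdeal_setOf_positiveBlocks_finite hIdeal, _,
    isADFamily_image_biUnion hdisj hIdeal h𝒜, ?_⟩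
  rw [Cardinal.mk_image_eq (biUnion_injective hdisj hIdeal), hcard]

theorem stmt7 (P : ℕ → Set ℕ)
    (hdisj : Pairwise (Function.onFun Disjoint P))
    (hcover : (⋃ n, P n) = Set.univ)
    (hinf : ∀ n, (P n).Infinite)
    (In : ℕ → Set (Set ℕ)) (hIn : ∀ n, MaximalIdealOn (P n) (In n)) :
    IsIdeal {A : Set ℕ | {n : ℕ | A ∩ P n ∉ In n}.Finite} ∧
    ∃ 𝒜 : Set (Set ℕ), IsADFamily {A : Set ℕ | {n : ℕ | A ∩ P n ∉ In n}.Finite} 𝒜 ∧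
      Cardinal.mk 𝒜 = Cardinal.continuum :=
  stmt7_general P hdisj In hIn
end

section
/- Let I be a maximal ideal on ℕ. If δ is an abstract upper density with Z_δ = I, then δ takes only the values 0 and 1. In particular, there is no rich abstract upper density δ with Z_δ = I. -/
open Set Filter
open scoped Classical

theorem stmt8 (I : Set (Set ℕ)) (hI : MaximalIdeal I) :
    (∀ δ : Set ℕ → ℝ, IsAUD δ → ZSet δ = I → ∀ A : Set ℕ, δ A = 0 ∨ δ A = 1) ∧
    ¬ ∃ δ : Set ℕ → ℝ, IsAUD δ ∧ Rich δ ∧ ZSet δ = I := by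
  obtain ⟨⟨hUn, hSub, hFin, hUniv⟩, hMax⟩ := hI
  -- maximality implies A ∈ I or Aᶜ ∈ I
  have key : ∀ A : Set ℕ, A ∈ I ∨ Aᶜ ∈ I := by
    intro A
    by_cases hA : A ∈ I
    · exact Or.inl hA
    by_cases hAc : Aᶜ ∈ I
    · exact Or.inr hAc
    exfalso
    set J : Set (Set ℕ) := {B | B ∩ Aᶜ ∈ I} with hJ
    have hJideal : IsIdeal J := by
      refine ⟨?_, ?_, ?_, ?_⟩
      · intro B C hB hC
        have : (B ∪ C) ∩ Aᶜ = (B ∩ Aᶜ) ∪ (C ∩ Aᶜ) := Set.union_inter_distrib_right B C Aᶜ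
        simpa [hJ, this] using hUn _ _ hB hC
      · intro B C hBC hC
        exact hSub _ _ (Set.inter_subset_inter_left _ hBC) hC
      · intro B hB
        exact hFin _ (hB.subset (Set.inter_subset_left))
      · simpa [hJ] using hAc
    have hIJ : I ⊆ J := by
      intro B hB
      exact hSub _ _ Set.inter_subset_left hB
    have hEq := hMax J hJideal hIJ
    have hAJ : A ∈ J := by
      have : A ∩ Aᶜ = ∅ := Set.inter_compl_self A
      simpa [hJ, this] using hFin ∅ Set.finite_empty
    rw [← hEq] at hAJ
    exact hA hAJ
  have main : ∀ δ : Set ℕ → ℝ, IsAUD δ → ZSet δ = I → ∀ A : Set ℕ, δ A = 0 ∨ δ A = 1 := by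
    intro δ ⟨hbd, huniv, _, hmono, hsubadd⟩ hZ A
    rcases key A with h | h
    · left
      rw [← hZ] at h
      exact h
    · right
      rw [← hZ] at h
      have hAc0 : δ Aᶜ = 0 := h
      have h1 : (1:ℝ) ≤ δ A + δ Aᶜ := by
        have := hsubadd A Aᶜ
        rw [Set.union_compl_self, huniv] at this
        exact this
      rw [hAc0, add_zero] at h1
      exact le_antisymm (hbd A).2 h1
  refine ⟨main, ?_⟩
  rintro ⟨δ, hδ, hrich, hZ⟩
  obtain ⟨A, hA⟩ := hrich (1/2) (by norm_num)
  rcases main δ hδ hZ A with h | h <;> rw [hA] at h <;> norm_num at h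
end

section
/- Let N ≥ 2, let {P_1, ..., P_N} be a partition of ℕ into infinite sets, and let I_n be a maximal ideal on P_n for each n ≤ N. Then I = {A ⊆ ℕ : A ∩ P_n ∈ I_n for every n ≤ N} is a non-maximal ideal on ℕ, and every abstract upper density δ with Z_δ = I satisfies δ(A) ≥ min{δ(P_n) : n ≤ N} > 0 for all A ∉ I; hence there is no rich abstract upper density δ with Z_δ = I. -/
open Set Filter
open scoped Classical

theorem stmt9 (N : ℕ) (hN : 2 ≤ N) (P : Fin N → Set ℕ)
    (hdisj : Pairwise (Function.onFun Disjoint P))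
    (hcover : (⋃ n, P n) = Set.univ)
    (hinf : ∀ n, (P n).Infinite)
    (In : Fin N → Set (Set ℕ)) (hIn : ∀ n, MaximalIdealOn (P n) (In n)) :
    IsIdeal {A : Set ℕ | ∀ n, A ∩ P n ∈ In n} ∧
    ¬ MaximalIdeal {A : Set ℕ | ∀ n, A ∩ P n ∈ In n} ∧
    (∀ δ : Set ℕ → ℝ, IsAUD δ → ZSet δ = {A : Set ℕ | ∀ n, A ∩ P n ∈ In n} →
      (∀ n, 0 < δ (P n)) ∧
      ∀ A : Set ℕ, A ∉ {A : Set ℕ | ∀ n, A ∩ P n ∈ In n} → ∃ n, δ (P n) ≤ δ A) ∧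
    ¬ ∃ δ : Set ℕ → ℝ, IsAUD δ ∧ Rich δ ∧
        ZSet δ = {A : Set ℕ | ∀ n, A ∩ P n ∈ In n} := by
  classical
  have hNpos : 0 < N := by omega
  set n0 : Fin N := ⟨0, by omega⟩ with hn0
  set n1 : Fin N := ⟨1, by omega⟩ with hn1
  have hne : n1 ≠ n0 := by simp [hn0, hn1, Fin.ext_iff]
  set I : Set (Set ℕ) := {A : Set ℕ | ∀ n, A ∩ P n ∈ In n} with hIdef
  have hInEmpty : ∀ n, (∅ : Set ℕ) ∈ In n := fun n =>
    (hIn n).1.2.2.2.1 ∅ (Set.empty_subset _) Set.finite_empty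
  have hPnotI : ∀ n, P n ∉ In n := fun n => (hIn n).1.2.2.2.2
  have hIdeal : IsIdeal I := by
    refine ⟨fun A B hA hB n => ?_, fun A B hAB hB n => ?_, fun A hA n => ?_, fun h => ?_⟩
    · rw [Set.union_inter_distrib_right]
      exact (hIn n).1.2.1 _ _ (hA n) (hB n)
    · exact (hIn n).1.2.2.1 _ _ (Set.inter_subset_inter_left _ hAB) (hB n)
    · exact (hIn n).1.2.2.2.1 _ Set.inter_subset_right (hA.inter_of_left _)
    · exact hPnotI n0 (by simpa using h n0)
  have hPninI : ∀ n, P n ∉ I := by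
    intro n hn
    exact hPnotI n (by simpa using hn n)
  have hdens : ∀ δ : Set ℕ → ℝ, IsAUD δ → ZSet δ = I →
      (∀ n, 0 < δ (P n)) ∧ ∀ A : Set ℕ, A ∉ I → ∃ n, δ (P n) ≤ δ A := by
    intro δ hδ hZ
    obtain ⟨hbd, huniv, hfin, hmono, hsubadd⟩ := hδ
    have hpos : ∀ n, 0 < δ (P n) := by
      intro n
      rcases lt_or_eq_of_le (hbd (P n)).1 with h | h
      · exact h
      · exact absurd (hZ ▸ (h.symm : δ (P n) = 0) : P n ∈ I) (hPninI n)
    refine ⟨hpos, ?_⟩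
    intro A hA
    simp only [hIdef, Set.mem_setOf_eq, not_forall] at hA
    obtain ⟨n, hn⟩ := hA
    refine ⟨n, ?_⟩
    have hPA : P n \ A ∈ In n := by
      rcases (hIn n).2 (A ∩ P n) Set.inter_subset_right with h | h
      · exact absurd h hn
      · have heq : P n \ (A ∩ P n) = P n \ A := by
          ext x; simp only [Set.mem_diff, Set.mem_inter_iff]; tauto
        rwa [heq] at h
    have hPAI : P n \ A ∈ I := by
      intro m
      by_cases hm : m = n
      · subst hm
        exact (hIn m).1.2.2.1 _ _ (fun x hx => hx.1) hPA
      · have hdm : P n ∩ P m = ∅ :=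
          Set.disjoint_iff_inter_eq_empty.mp (hdisj (fun h => hm h.symm))
        have hss : (P n \ A) ∩ P m ⊆ (∅ : Set ℕ) := by
          rw [← hdm]; exact Set.inter_subset_inter_left _ Set.diff_subset
        exact (hIn m).1.2.2.1 _ _ hss (hInEmpty m)
    have hδPA : δ (P n \ A) = 0 := by
      have : P n \ A ∈ ZSet δ := hZ ▸ hPAI
      exact this
    calc δ (P n) ≤ δ ((P n \ A) ∪ A) := by
          refine hmono _ _ (fun x hx => ?_)
          by_cases h : x ∈ A
          · exact Or.inr h
          · exact Or.inl ⟨hx, h⟩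
      _ ≤ δ (P n \ A) + δ A := hsubadd _ _
      _ = δ A := by rw [hδPA]; ring
  refine ⟨hIdeal, ?_, hdens, ?_⟩
  · rintro ⟨-, hmax⟩
    set J : Set (Set ℕ) := {A : Set ℕ | A ∩ P n0 ∈ In n0} with hJdef
    have hJideal : IsIdeal J := by
      refine ⟨fun A B hA hB => ?_, fun A B hAB hB => ?_, fun A hA => ?_, fun h => ?_⟩
      · show (A ∪ B) ∩ P n0 ∈ In n0
        rw [Set.union_inter_distrib_right]
        exact (hIn n0).1.2.1 _ _ hA hB
      · exact (hIn n0).1.2.2.1 _ _ (Set.inter_subset_inter_left _ hAB) hB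
      · exact (hIn n0).1.2.2.2.1 _ Set.inter_subset_right (hA.inter_of_left _)
      · exact hPnotI n0 (by simpa [hJdef] using h)
    have heq : I = J := hmax J hJideal (fun A hA => hA n0)
    have hP1J : P n1 ∈ J := by
      have h0 : P n1 ∩ P n0 = ∅ := Set.disjoint_iff_inter_eq_empty.mp (hdisj hne)
      show P n1 ∩ P n0 ∈ In n0
      rw [h0]; exact hInEmpty n0
    rw [← heq] at hP1J
    exact hPninI n1 hP1J
  · rintro ⟨δ, hδ, hrich, hZ⟩
    obtain ⟨hpos, hmin⟩ := hdens δ hδ hZ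
    obtain ⟨b, -, hb⟩ := Finset.exists_min_image (Finset.univ : Finset (Fin N))
      (fun n => δ (P n)) ⟨n0, Finset.mem_univ n0⟩
    have hm0 : 0 < δ (P b) := hpos b
    have hm1 : δ (P b) ≤ 1 := (hδ.1 (P b)).2
    obtain ⟨A, hA⟩ := hrich (δ (P b) / 2) ⟨by linarith, by linarith⟩
    have hAnotI : A ∉ I := by
      intro hAI
      have : A ∈ ZSet δ := hZ ▸ hAI
      rw [ZSet, Set.mem_setOf_eq, hA] at this; linarith
    obtain ⟨n, hn⟩ := hmin A hAnotI
    have := hb n (Finset.mem_univ n)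
    rw [hA] at hn
    linarith
end

section
/- Let I be a translation invariant ideal on ℕ. If there exists an I-translation-almost-disjoint family of cardinality continuum, then there is a translation invariant rich abstract upper density δ with Z_δ = I. -/
open Set Filter
open scoped Classical

lemma shiftSet_zero (A : Set ℕ) : shiftSet A 0 = A := by
  ext n; simp [shiftSet]

lemma shiftSet_mono {A B : Set ℕ} (h : A ⊆ B) (k : ℤ) : shiftSet A k ⊆ shiftSet B k := by
  rintro n ⟨a, ha, hk⟩; exact ⟨a, h ha, hk⟩

lemma shiftSet_inter (A B : Set ℕ) (k m : ℤ) :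
    shiftSet A k ∩ shiftSet B m = shiftSet (A ∩ shiftSet B (m - k)) k := by
  ext n
  simp only [shiftSet, Set.mem_inter_iff, Set.mem_setOf_eq]
  constructor
  · rintro ⟨⟨a, ha, hak⟩, b, hb, hbm⟩
    exact ⟨a, ⟨ha, b, hb, by omega⟩, hak⟩
  · rintro ⟨a, ⟨ha, b, hb, hba⟩, hak⟩
    exact ⟨⟨a, ha, hak⟩, b, hb, by omega⟩

lemma shiftSet_shift_neg (A : Set ℕ) (k : ℤ) : shiftSet (shiftSet A k) (-k) ⊆ A := by
  rintro n ⟨x, ⟨a, ha, hak⟩, hx⟩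
  have : a = n := by omega
  rwa [this] at ha

lemma shift_mem_iff {I : Set (Set ℕ)} (hI : TransInvIdeal I) (A : Set ℕ) (k : ℤ) :
    shiftSet A k ∈ I ↔ A ∈ I := by
  constructor
  · intro h
    have h2 := hI.2 _ h (-k)
    have hfin : ({n : ℕ | (n : ℤ) + k < 0} : Set ℕ).Finite := by
      apply Set.Finite.subset (Set.finite_Iio (-k).toNat)
      intro n hn
      simp only [Set.mem_setOf_eq] at hn
      simp only [Set.mem_Iio]
      omega
    have hsub : A ⊆ shiftSet (shiftSet A k) (-k) ∪ {n : ℕ | (n : ℤ) + k < 0} := by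
      intro a ha
      by_cases hc : (a : ℤ) + k < 0
      · exact Or.inr hc
      · left
        refine ⟨((a : ℤ) + k).toNat, ⟨a, ha, by omega⟩, by omega⟩
    exact hI.1.2.1 _ _ hsub (hI.1.1 _ _ h2 (hI.1.2.2.1 _ hfin))
  · intro h; exact hI.2 _ h k

/-- Auxiliary: `A` contains an `I`-positive set translation-almost-disjoint from all of `𝒜`. -/
def EA (I 𝒜 : Set (Set ℕ)) (A : Set ℕ) : Prop :=
  ∃ A', A' ⊆ A ∧ A' ∉ I ∧ ∀ B ∈ 𝒜, ∀ k : ℤ, A' ∩ shiftSet B k ∈ I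

/-- Auxiliary value set used to define the density. -/
def TA (I 𝒜 : Set (Set ℕ)) (c : ↥𝒜 → ℝ) (A : Set ℕ) : Set ℝ :=
  insert 0 ({r | ∃ B : 𝒜, c B = r ∧ ∃ k : ℤ, A ∩ shiftSet (B : Set ℕ) k ∉ I} ∪
    {r | r = 1 ∧ EA I 𝒜 A})

/-- The density. -/
noncomputable def dA (I 𝒜 : Set (Set ℕ)) (c : ↥𝒜 → ℝ) (A : Set ℕ) : ℝ :=
  if A ∈ I then 0 else sSup (TA I 𝒜 c A)

section Aux
variable {I 𝒜 : Set (Set ℕ)} {c : ↥𝒜 → ℝ}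

lemma TA_zero_mem (A : Set ℕ) : (0:ℝ) ∈ TA I 𝒜 c A := Set.mem_insert _ _

lemma TA_bdd (hc : ∀ B : 𝒜, c B ∈ Set.Ioc (0:ℝ) 1) (A : Set ℕ) :
    ∀ r ∈ TA I 𝒜 c A, r ≤ 1 := by
  intro r hr
  rcases hr with rfl | hr
  · norm_num
  · rcases hr with ⟨B, hBr, -⟩ | ⟨rfl, -⟩
    · exact hBr ▸ (hc B).2
    · exact le_rfl

lemma TA_bddAbove (hc : ∀ B : 𝒜, c B ∈ Set.Ioc (0:ℝ) 1) (A : Set ℕ) :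
    BddAbove (TA I 𝒜 c A) := ⟨1, fun r hr => TA_bdd hc A r hr⟩

lemma TA_nonempty (A : Set ℕ) : (TA I 𝒜 c A).Nonempty := ⟨0, TA_zero_mem A⟩

lemma dA_nonneg (hc : ∀ B : 𝒜, c B ∈ Set.Ioc (0:ℝ) 1) (A : Set ℕ) : 0 ≤ dA I 𝒜 c A := by
  unfold dA; split
  · exact le_rfl
  · exact le_csSup (TA_bddAbove hc A) (TA_zero_mem A)

lemma dA_le_one (hc : ∀ B : 𝒜, c B ∈ Set.Ioc (0:ℝ) 1) (A : Set ℕ) : dA I 𝒜 c A ≤ 1 := by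
  unfold dA; split
  · norm_num
  · exact csSup_le (TA_nonempty A) (TA_bdd hc A)

end Aux

section Aux2
variable {I 𝒜 : Set (Set ℕ)} {c : ↥𝒜 → ℝ}

lemma EA_mono {A B : Set ℕ} (h : A ⊆ B) (hA : EA I 𝒜 A) : EA I 𝒜 B := by
  obtain ⟨A', h1, h2, h3⟩ := hA
  exact ⟨A', h1.trans h, h2, h3⟩

lemma TA_mono (hI : TransInvIdeal I) {A B : Set ℕ} (h : A ⊆ B) :
    TA I 𝒜 c A ⊆ TA I 𝒜 c B := by
  intro r hr
  rcases hr with rfl | hr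
  · exact TA_zero_mem B
  · rcases hr with ⟨C, hCr, k, hk⟩ | ⟨rfl, hEA⟩
    · refine Or.inr (Or.inl ⟨C, hCr, k, fun hmem => hk ?_⟩)
      exact hI.1.2.1 _ _ (Set.inter_subset_inter_left _ h) hmem
    · exact Or.inr (Or.inr ⟨rfl, EA_mono h hEA⟩)

lemma EA_shift (hI : TransInvIdeal I) (A : Set ℕ) (k : ℤ) (h : EA I 𝒜 A) :
    EA I 𝒜 (shiftSet A k) := by
  obtain ⟨A', h1, h2, h3⟩ := h
  refine ⟨shiftSet A' k, shiftSet_mono h1 k,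
    fun hmem => h2 ((shift_mem_iff hI A' k).mp hmem), ?_⟩
  intro B hB m
  rw [shiftSet_inter]
  exact hI.2 _ (h3 B hB (m - k)) k

lemma EA_shift_iff (hI : TransInvIdeal I) (A : Set ℕ) (k : ℤ) :
    EA I 𝒜 (shiftSet A k) ↔ EA I 𝒜 A := by
  constructor
  · intro h
    exact EA_mono (shiftSet_shift_neg A k) (EA_shift hI _ (-k) h)
  · exact EA_shift hI A k

lemma shift_inter_iff (hI : TransInvIdeal I) (A : Set ℕ) (k : ℤ) (B : Set ℕ) :
    (∃ m : ℤ, shiftSet A k ∩ shiftSet B m ∉ I) ↔ (∃ m : ℤ, A ∩ shiftSet B m ∉ I) := by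
  constructor
  · rintro ⟨m, hm⟩
    refine ⟨m - k, fun h => hm ?_⟩
    rw [shiftSet_inter]
    exact hI.2 _ h k
  · rintro ⟨m, hm⟩
    refine ⟨m + k, fun h => hm ?_⟩
    rw [shiftSet_inter, show m + k - k = m by ring] at h
    exact (shift_mem_iff hI _ k).mp h

lemma TA_shift (hI : TransInvIdeal I) (A : Set ℕ) (k : ℤ) :
    TA I 𝒜 c (shiftSet A k) = TA I 𝒜 c A := by
  unfold TA
  rw [EA_shift_iff hI]
  congr 2
  ext r
  simp only [Set.mem_setOf_eq]
  exact exists_congr fun B => and_congr_right fun _ => shift_inter_iff hI A k B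

lemma dA_shift (hI : TransInvIdeal I) (A : Set ℕ) (k : ℤ) :
    dA I 𝒜 c (shiftSet A k) = dA I 𝒜 c A := by
  unfold dA
  by_cases h : A ∈ I
  · rw [if_pos h, if_pos (hI.2 _ h k)]
  · rw [if_neg h, if_neg (fun hm => h ((shift_mem_iff hI A k).mp hm)), TA_shift hI]

lemma dA_pos (hI : TransInvIdeal I) (hc : ∀ B : 𝒜, c B ∈ Set.Ioc (0:ℝ) 1)
    {A : Set ℕ} (hA : A ∉ I) : 0 < dA I 𝒜 c A := by
  rw [dA, if_neg hA]
  by_cases hEA : EA I 𝒜 A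
  · have h1 : (1:ℝ) ∈ TA I 𝒜 c A := Or.inr (Or.inr ⟨rfl, hEA⟩)
    have := le_csSup (TA_bddAbove hc A) h1
    linarith
  · have : ¬ ∀ B ∈ 𝒜, ∀ m : ℤ, A ∩ shiftSet B m ∈ I := by
      intro h; exact hEA ⟨A, subset_rfl, hA, h⟩
    push_neg at this
    obtain ⟨B, hB, m, hm⟩ := this
    have h1 : c ⟨B, hB⟩ ∈ TA I 𝒜 c A := Or.inr (Or.inl ⟨⟨B, hB⟩, rfl, m, hm⟩)
    have := le_csSup (TA_bddAbove hc A) h1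
    have := (hc ⟨B, hB⟩).1
    linarith

end Aux2

theorem stmt10 (I : Set (Set ℕ)) (hI : TransInvIdeal I) (𝒜 : Set (Set ℕ))
    (h𝒜 : IsTADFamily I 𝒜) (hcard : Cardinal.mk 𝒜 = Cardinal.continuum) :
    ∃ δ : Set ℕ → ℝ, IsAUD δ ∧ TransInvAUD δ ∧ Rich δ ∧ ZSet δ = I := by
  obtain ⟨φ⟩ : Nonempty (↥𝒜 ≃ (Set.Ioc (0:ℝ) 1)) := by
    rw [← Cardinal.eq, hcard, Cardinal.mk_Ioc_real (by norm_num : (0:ℝ) < 1)]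
  set c : ↥𝒜 → ℝ := fun B => (φ B : ℝ) with hcdef
  have hc : ∀ B : 𝒜, c B ∈ Set.Ioc (0:ℝ) 1 := fun B => (φ B).2
  refine ⟨dA I 𝒜 c, ⟨fun A => ⟨dA_nonneg hc A, dA_le_one hc A⟩, ?_, ?_, ?_, ?_⟩,
    fun A k => dA_shift hI A k, ?_, ?_⟩
  · -- δ univ = 1
    have huniv : (Set.univ : Set ℕ) ∉ I := hI.1.2.2.2
    rw [dA, if_neg huniv]
    refine le_antisymm (csSup_le (TA_nonempty _) (TA_bdd hc _)) ?_
    set B₁ : ↥𝒜 := φ.symm ⟨1, by norm_num⟩ with hB₁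
    have hcB₁ : c B₁ = 1 := by simp [hcdef, hB₁]
    refine le_csSup (TA_bddAbove hc _) (Or.inr (Or.inl ⟨B₁, hcB₁, 0, ?_⟩))
    rw [shiftSet_zero, Set.univ_inter]
    exact h𝒜.1 _ B₁.2
  · -- finite sets
    intro A hA
    rw [dA, if_pos (hI.1.2.2.1 A hA)]
  · -- monotone
    intro A B hAB
    by_cases hA : A ∈ I
    · rw [dA, if_pos hA]; exact dA_nonneg hc B
    · have hB : B ∉ I := fun h => hA (hI.1.2.1 _ _ hAB h)
      rw [dA, if_neg hA, dA, if_neg hB]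
      exact csSup_le_csSup (TA_bddAbove hc B) (TA_nonempty A) (TA_mono hI hAB)
  · -- subadditive
    intro A B
    by_cases hAB : A ∪ B ∈ I
    · rw [dA, if_pos hAB]
      have := dA_nonneg hc (I := I) (𝒜 := 𝒜) A
      have := dA_nonneg hc (I := I) (𝒜 := 𝒜) B
      linarith
    · rw [dA, if_neg hAB]
      refine csSup_le (TA_nonempty _) ?_
      intro r hr
      have hdA := dA_nonneg hc (I := I) (𝒜 := 𝒜) A
      have hdB := dA_nonneg hc (I := I) (𝒜 := 𝒜) B
      rcases hr with rfl | ⟨C, hCr, k, hk⟩ | ⟨rfl, hEA⟩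
      · linarith
      · have hsplit : A ∩ shiftSet (C : Set ℕ) k ∉ I ∨ B ∩ shiftSet (C : Set ℕ) k ∉ I := by
          by_contra h
          push_neg at h
          apply hk
          rw [Set.union_inter_distrib_right]
          exact hI.1.1 _ _ h.1 h.2
        rcases hsplit with h | h
        · have hA : A ∉ I := fun hm => h (hI.1.2.1 _ _ Set.inter_subset_left hm)
          have : r ≤ dA I 𝒜 c A := by
            rw [dA, if_neg hA]
            exact le_csSup (TA_bddAbove hc A) (Or.inr (Or.inl ⟨C, hCr, k, h⟩))
          linarith
        · have hB : B ∉ I := fun hm => h (hI.1.2.1 _ _ Set.inter_subset_left hm)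
          have : r ≤ dA I 𝒜 c B := by
            rw [dA, if_neg hB]
            exact le_csSup (TA_bddAbove hc B) (Or.inr (Or.inl ⟨C, hCr, k, h⟩))
          linarith
      · obtain ⟨A', hsub, hA', had⟩ := hEA
        have hsplit : A' ∩ A ∉ I ∨ A' ∩ B ∉ I := by
          by_contra h
          push_neg at h
          apply hA'
          have : A' = (A' ∩ A) ∪ (A' ∩ B) := by
            rw [← Set.inter_union_distrib_left, Set.inter_eq_left.mpr hsub]
          rw [this]
          exact hI.1.1 _ _ h.1 h.2
        have key : ∀ X : Set ℕ, A' ∩ X ∉ I →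
            (1:ℝ) ≤ dA I 𝒜 c X := by
          intro X hX
          have hXI : X ∉ I := fun hm => hX (hI.1.2.1 _ _ Set.inter_subset_right hm)
          have hEX : EA I 𝒜 X := by
            refine ⟨A' ∩ X, Set.inter_subset_right, hX, ?_⟩
            intro C hC m
            exact hI.1.2.1 _ _ (Set.inter_subset_inter_left _ Set.inter_subset_left)
              (had C hC m)
          rw [dA, if_neg hXI]
          exact le_csSup (TA_bddAbove hc X) (Or.inr (Or.inr ⟨rfl, hEX⟩))
        rcases hsplit with h | h
        · have := key A h; linarith
        · have := key B h; linarith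
  · -- Rich
    intro r hr
    rcases eq_or_lt_of_le hr.1 with heq | hpos
    · refine ⟨∅, ?_⟩
      rw [dA, if_pos (hI.1.2.2.1 ∅ Set.finite_empty), heq]
    · set B₀ : ↥𝒜 := φ.symm ⟨r, ⟨hpos, hr.2⟩⟩ with hB₀
      have hcB₀ : c B₀ = r := by simp [hcdef, hB₀]
      have hB₀I : (B₀ : Set ℕ) ∉ I := h𝒜.1 _ B₀.2
      refine ⟨B₀, ?_⟩
      rw [dA, if_neg hB₀I]
      apply le_antisymm
      · refine csSup_le (TA_nonempty _) ?_
        intro x hx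
        rcases hx with rfl | ⟨C, hCx, k, hk⟩ | ⟨rfl, hEB⟩
        · exact le_of_lt hpos
        · by_cases hCB : C = B₀
          · rw [← hCx, hCB, hcB₀]
          · exact absurd (h𝒜.2 _ B₀.2 _ C.2
              (fun h => hCB (Subtype.ext h.symm)) k) hk
        · obtain ⟨A', hsub, hA', had⟩ := hEB
          have := had _ B₀.2 0
          rw [shiftSet_zero, Set.inter_eq_left.mpr hsub] at this
          exact absurd this hA'
      · refine le_csSup (TA_bddAbove hc _) (Or.inr (Or.inl ⟨B₀, hcB₀, 0, ?_⟩))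
        rw [shiftSet_zero, Set.inter_self]
        exact hB₀I
  · -- ZSet = I
    ext A
    simp only [ZSet, Set.mem_setOf_eq]
    constructor
    · intro h
      by_contra hA
      exact absurd h (ne_of_gt (dA_pos hI hc hA))
    · intro h
      rw [dA, if_pos h]
end

section
/- Let I be an ideal on ℕ and let k_1 < k_2 < ... be an increasing sequence of naturals such that any set containing infinitely many of the intervals [k_n, k_{n+1}) is in I⁺, and assume k_{n+1} - k_n → ∞. Then there exists an I-translation-almost-disjoint family of cardinality continuum. (Consequently, every ideal with the Baire property admits an I-TAD family of size continuum, by Talagrand's characterization.) -/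
open Set Filter
open scoped Classical

namespace Stmt11Aux

def code (f : ℕ → Bool) (n : ℕ) : ℕ :=
  Encodable.encode ((List.range n).map f)

lemma code_eq {f g : ℕ → Bool} {n m : ℕ} (h : code f n = code g m) :
    n = m ∧ ∀ i < n, f i = g i := by
  have hl : (List.range n).map f = (List.range m).map g := Encodable.encode_injective h
  have hn : n = m := by
    have := congrArg List.length hl; simpa using this
  subst hn
  refine ⟨rfl, fun i hi => ?_⟩
  exact List.map_eq_map_iff.mp hl i (List.mem_range.mpr hi)

lemma code_injective (f : ℕ → Bool) : Function.Injective (code f) :=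
  fun _ _ h => (code_eq h).1

/-- The set associated to `f`: union of the blocks with indices `3 * code f n`. -/
def bigA (k : ℕ → ℕ) (f : ℕ → Bool) : Set ℕ :=
  ⋃ n : ℕ, Set.Ico (k (3 * code f n)) (k (3 * code f n + 1))

lemma mem_bigA {k : ℕ → ℕ} {f : ℕ → Bool} {x : ℕ} :
    x ∈ bigA k f ↔ ∃ n, k (3 * code f n) ≤ x ∧ x < k (3 * code f n + 1) := by
  simp [bigA]

lemma shiftSet_zero (A : Set ℕ) : shiftSet A 0 = A := by
  ext n; simp [shiftSet]

lemma bigA_infinite (k : ℕ → ℕ) (hk : StrictMono k) (f : ℕ → Bool) :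
    (bigA k f).Infinite := by
  apply Set.infinite_of_injective_forall_mem (f := fun n => k (3 * code f n))
  · intro a b h
    have h2 : 3 * code f a = 3 * code f b := hk.injective h
    exact code_injective f (by omega)
  · intro n
    exact mem_bigA.mpr ⟨n, le_rfl, hk (Nat.lt_succ_self _)⟩

lemma key (k : ℕ → ℕ) (hk : StrictMono k)
    (hgap : Filter.Tendsto (fun n => k (n+1) - k n) Filter.atTop Filter.atTop)
    {f f' : ℕ → Bool} (i : ℕ) (hi : f i ≠ f' i) (j : ℤ) :
    (bigA k f ∩ shiftSet (bigA k f') j).Finite := by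
  obtain ⟨N₀, hN₀⟩ := Filter.eventually_atTop.mp (hgap.eventually_ge_atTop (j.natAbs + 1))
  set M := (Finset.range (i+1)).sup (fun n => code f n) with hM
  set N := max N₀ (3 * M + 1) with hN
  apply Set.Finite.subset (Set.finite_Iio (k N + j.natAbs))
  rintro x ⟨hx1, hx2⟩
  obtain ⟨n, hn1, hn2⟩ := mem_bigA.mp hx1
  obtain ⟨b, hb, hbj⟩ := hx2
  obtain ⟨m, hm1, hm2⟩ := mem_bigA.mp hb
  set p := 3 * code f n with hp
  set q := 3 * code f' m with hq
  have gap : ∀ r, N₀ ≤ r → k r + j.natAbs < k (r+1) := by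
    intro r hr
    have h1 := hN₀ r hr
    have h2 := hk (Nat.lt_succ_self r)
    omega
  by_cases hpN : p < N
  · have : k (p+1) ≤ k N := hk.monotone (by omega)
    simp only [Set.mem_Iio]; omega
  by_cases hqN : q < N
  · have : k (q+1) ≤ k N := hk.monotone (by omega)
    simp only [Set.mem_Iio]; omega
  exfalso
  push_neg at hpN hqN
  rcases lt_trichotomy p q with hlt | heq | hgt
  · have hx : k (p+1) ≤ k (q-1) := hk.monotone (by omega)
    have hg := gap (q-1) (by omega)
    have hq1 : q - 1 + 1 = q := by omega
    rw [hq1] at hg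
    omega
  · have hc : code f n = code f' m := by omega
    obtain ⟨hnm, hag⟩ := code_eq hc
    have hni : n ≤ i := by
      by_contra hcon
      push_neg at hcon
      exact hi (hag i hcon)
    have hle : code f n ≤ M := hM ▸ Finset.le_sup (Finset.mem_range.mpr (by omega))
    omega
  · have hx : k (q+1) ≤ k (p-1) := hk.monotone (by omega)
    have hg := gap (p-1) (by omega)
    have hp1 : p - 1 + 1 = p := by omega
    rw [hp1] at hg
    omega

end Stmt11Aux

theorem stmt11 (I : Set (Set ℕ)) (hI : IsIdeal I) (k : ℕ → ℕ) (hk : StrictMono k)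
    (htal : ∀ A : Set ℕ, {n : ℕ | Set.Ico (k n) (k (n+1)) ⊆ A}.Infinite → A ∉ I)
    (hgap : Filter.Tendsto (fun n => k (n+1) - k n) Filter.atTop Filter.atTop) :
    ∃ 𝒜 : Set (Set ℕ), IsTADFamily I 𝒜 ∧ Cardinal.mk 𝒜 = Cardinal.continuum := by
  classical
  refine ⟨Set.range (Stmt11Aux.bigA k), ⟨?_, ?_⟩, ?_⟩
  · rintro A ⟨f, rfl⟩
    apply htal
    apply Set.infinite_of_injective_forall_mem (f := fun n => 3 * Stmt11Aux.code f n)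
    · intro a b h
      have h' : 3 * Stmt11Aux.code f a = 3 * Stmt11Aux.code f b := h
      exact Stmt11Aux.code_injective f (by omega)
    · intro n
      exact Set.subset_iUnion (fun n => Set.Ico (k (3 * Stmt11Aux.code f n)) (k (3 * Stmt11Aux.code f n + 1))) n
  · rintro A ⟨f, rfl⟩ B ⟨f', rfl⟩ hne j
    have hff : f ≠ f' := by rintro rfl; exact hne rfl
    obtain ⟨i, hi⟩ := Function.ne_iff.mp hff
    exact hI.2.2.1 _ (Stmt11Aux.key k hk hgap i hi j)
  · have hinj : Function.Injective (Stmt11Aux.bigA k) := by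
      intro f f' h
      by_contra hff
      obtain ⟨i, hi⟩ := Function.ne_iff.mp hff
      have hfin := Stmt11Aux.key k hk hgap i hi 0
      rw [Stmt11Aux.shiftSet_zero, ← h, Set.inter_self] at hfin
      exact Stmt11Aux.bigA_infinite k hk f hfin
    rw [Cardinal.mk_range_eq _ hinj, ← Cardinal.power_def, Cardinal.mk_bool,
      Cardinal.mk_nat, Cardinal.two_power_aleph0]
end

section
/- If I is a T-maximal ideal on ℕ, then for any A, B ∉ I there exists k ∈ ℤ with (A + k) ∩ B ∉ I. In particular, there is no I-translation-almost-disjoint family with more than one element, hence none of cardinality continuum. -/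
open Set Filter
open scoped Classical

/-!
Suppose `A ∉ I`. The sets covered, up to a set in `I`, by finitely many shifts of `A` form a
translation invariant family of sets which is closed under finite unions and subsets and
contains `I` and `A`. It cannot be a proper ideal, by T-maximality, so finitely many shifts
`A + k₁, …, A + kₙ` cover `ℕ` up to a set in `I`. If moreover every `(A + kᵢ) ∩ B` were in `I`,
then `B` would be in `I` as well.
-/

lemma IsIdeal.biUnion_mem {I : Set (Set ℕ)} (hI : IsIdeal I) {f : ℤ → Set ℕ} (F : Finset ℤ)
    (hf : ∀ k ∈ F, f k ∈ I) : (⋃ k ∈ F, f k) ∈ I := by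
  induction F using Finset.induction_on with
  | empty => simpa using hI.2.2.1 ∅ finite_empty
  | insert k F _ ih =>
    rw [Finset.set_biUnion_insert]
    exact hI.1 _ _ (hf k (F.mem_insert_self k))
      (ih fun j hj => hf j (Finset.mem_insert_of_mem hj))

lemma shiftSet_shiftSet_subset (A : Set ℕ) (k j : ℤ) :
    shiftSet (shiftSet A k) j ⊆ shiftSet A (k + j) := by
  rintro n ⟨c, ⟨a, ha, hac⟩, hcn⟩
  exact ⟨a, ha, by rw [← hcn, ← hac, add_assoc]⟩

def shiftCover (I : Set (Set ℕ)) (A : Set ℕ) : Set (Set ℕ) :=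
  {C | ∃ F : Finset ℤ, C \ ⋃ k ∈ F, shiftSet A k ∈ I}

section shiftCover

variable {I : Set (Set ℕ)} {A : Set ℕ}

lemma subset_shiftCover : I ⊆ shiftCover I A :=
  fun C hC => ⟨∅, by simpa using hC⟩

lemma mem_shiftCover_self (hI : IsIdeal I) : A ∈ shiftCover I A := by
  refine ⟨{0}, ?_⟩
  simpa [shiftSet_zero] using hI.2.2.1 ∅ finite_empty

lemma shiftCover_union_mem (hI : IsIdeal I) {C D : Set ℕ} (hC : C ∈ shiftCover I A)
    (hD : D ∈ shiftCover I A) : C ∪ D ∈ shiftCover I A := by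
  obtain ⟨F, hF⟩ := hC
  obtain ⟨G, hG⟩ := hD
  refine ⟨F ∪ G, hI.2.1 _ _ ?_ (hI.1 _ _ hF hG)⟩
  rw [Finset.set_biUnion_union, union_sdiff_distrib]
  exact union_subset_union (sdiff_subset_sdiff_right subset_union_left)
    (sdiff_subset_sdiff_right subset_union_right)

lemma shiftCover_mem_of_subset (hI : IsIdeal I) {C D : Set ℕ} (hCD : C ⊆ D)
    (hD : D ∈ shiftCover I A) : C ∈ shiftCover I A := by
  obtain ⟨F, hF⟩ := hD
  exact ⟨F, hI.2.1 _ _ (sdiff_subset_sdiff_left hCD) hF⟩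

lemma shiftSet_mem_shiftCover (hI : TransInvIdeal I) {C : Set ℕ} (hC : C ∈ shiftCover I A)
    (j : ℤ) : shiftSet C j ∈ shiftCover I A := by
  obtain ⟨F, hF⟩ := hC
  refine ⟨F.image (· + j), hI.1.2.1 _ _ ?_ (hI.2 _ hF j)⟩
  rintro n ⟨⟨c, hc, hcn⟩, hn⟩
  refine ⟨c, ⟨hc, fun hcF => hn ?_⟩, hcn⟩
  simp only [mem_iUnion, Finset.mem_image] at hcF ⊢
  obtain ⟨k, hk, hck⟩ := hcF
  exact ⟨k + j, ⟨k, hk, rfl⟩, shiftSet_shiftSet_subset A k j ⟨c, hck, hcn⟩⟩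

lemma transInvIdeal_shiftCover (hI : TransInvIdeal I) (huniv : univ ∉ shiftCover I A) :
    TransInvIdeal (shiftCover I A) :=
  ⟨⟨fun _ _ => shiftCover_union_mem hI.1, fun _ _ => shiftCover_mem_of_subset hI.1,
    fun _ hC => subset_shiftCover (hI.1.2.2.1 _ hC), huniv⟩,
    fun _ hC => shiftSet_mem_shiftCover hI hC⟩

end shiftCover

namespace TMaximalIdeal

variable {I : Set (Set ℕ)} (hI : TMaximalIdeal I)
include hI

lemma exists_compl_biUnion_shiftSet_mem {A : Set ℕ} (hA : A ∉ I) :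
    ∃ F : Finset ℤ, (⋃ k ∈ F, shiftSet A k)ᶜ ∈ I := by
  by_cases huniv : univ ∈ shiftCover I A
  · obtain ⟨F, hF⟩ := huniv
    exact ⟨F, by rwa [compl_eq_univ_sdiff]⟩
  · have hcover := hI.2 _ (transInvIdeal_shiftCover hI.1 huniv) subset_shiftCover
    exact absurd (hcover ▸ mem_shiftCover_self hI.1.1) hA

lemma exists_shiftSet_inter_notMem {A B : Set ℕ} (hA : A ∉ I) (hB : B ∉ I) :
    ∃ k : ℤ, shiftSet A k ∩ B ∉ I := by
  by_contra! h
  obtain ⟨F, hF⟩ := exists_compl_biUnion_shiftSet_mem hI hA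
  refine hB (hI.1.1.2.1 _ _ ?_ (hI.1.1.1 _ _ (hI.1.1.biUnion_mem F fun k _ => h k) hF))
  intro n hn
  by_cases hnF : n ∈ ⋃ k ∈ F, shiftSet A k
  · exact Or.inl (iUnion₂_inter _ B ▸ ⟨hnF, hn⟩)
  · exact Or.inr hnF

lemma isTADFamily_subsingleton {𝒜 : Set (Set ℕ)} (h𝒜 : IsTADFamily I 𝒜) : 𝒜.Subsingleton := by
  intro A hA B hB
  by_contra hne
  obtain ⟨k, hk⟩ := exists_shiftSet_inter_notMem hI (h𝒜.1 B hB) (h𝒜.1 A hA)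
  exact hk (inter_comm A _ ▸ h𝒜.2 A hA B hB hne k)

end TMaximalIdeal

theorem stmt14 (I : Set (Set ℕ)) (hI : TMaximalIdeal I) :
    (∀ A B : Set ℕ, A ∉ I → B ∉ I → ∃ k : ℤ, shiftSet A k ∩ B ∉ I) ∧
    (∀ 𝒜 : Set (Set ℕ), IsTADFamily I 𝒜 → 𝒜.Subsingleton) ∧
    ¬ ∃ 𝒜 : Set (Set ℕ), IsTADFamily I 𝒜 ∧ Cardinal.mk 𝒜 = Cardinal.continuum := by
  refine ⟨fun A B => hI.exists_shiftSet_inter_notMem, fun 𝒜 => hI.isTADFamily_subsingleton, ?_⟩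
  rintro ⟨𝒜, h𝒜, hcard⟩
  have hle : Cardinal.mk 𝒜 ≤ 1 :=
    Cardinal.mk_le_one_iff_set_subsingleton.mpr (hI.isTADFamily_subsingleton h𝒜)
  exact (Cardinal.one_lt_aleph0.trans Cardinal.aleph0_lt_continuum).not_ge (hcard ▸ hle)
end

section
/- If J is a T-maximal ideal on ℕ and I is any maximal ideal with J ⊆ I, then J = t(I), where t(I) = {A : (A + k) ∩ ℕ ∈ I for every k ∈ ℤ}. -/
open Set Filter
open scoped Classical

lemma shiftSet_union (A B : Set ℕ) (k : ℤ) :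
    shiftSet (A ∪ B) k = shiftSet A k ∪ shiftSet B k := by
  ext n; simp only [shiftSet, Set.mem_setOf_eq, Set.mem_union]
  constructor
  · rintro ⟨a, (h | h), hk⟩
    · exact Or.inl ⟨a, h, hk⟩
    · exact Or.inr ⟨a, h, hk⟩
  · rintro (⟨a, h, hk⟩ | ⟨a, h, hk⟩)
    · exact ⟨a, Or.inl h, hk⟩
    · exact ⟨a, Or.inr h, hk⟩

lemma shiftSet_finite {A : Set ℕ} (h : A.Finite) (k : ℤ) : (shiftSet A k).Finite := by
  have hsub : shiftSet A k ⊆ (fun a : ℕ => ((a : ℤ) + k).toNat) '' A := by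
    rintro n ⟨a, ha, hk⟩
    exact ⟨a, ha, show ((a : ℤ) + k).toNat = n by omega⟩
  exact (h.image _).subset hsub

lemma shiftSet_shiftSet (A : Set ℕ) (k m : ℤ) :
    shiftSet (shiftSet A k) m ⊆ shiftSet A (k + m) := by
  rintro n ⟨b, ⟨a, ha, hab⟩, hbn⟩
  exact ⟨a, ha, by omega⟩

theorem stmt16 (J I : Set (Set ℕ)) (hJ : TMaximalIdeal J) (hI : MaximalIdeal I)
    (hJI : J ⊆ I) : J = tIdeal I := by
  obtain ⟨⟨hJid, hJt⟩, hJmax⟩ := hJ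
  obtain ⟨⟨hIu, hId, hIf, hIuniv⟩, _⟩ := hI
  have ht : TransInvIdeal (tIdeal I) := by
    refine ⟨⟨?_, ?_, ?_, ?_⟩, ?_⟩
    · intro A B hA hB k
      rw [shiftSet_union]; exact hIu _ _ (hA k) (hB k)
    · intro A B hAB hB k
      exact hId _ _ (shiftSet_mono hAB k) (hB k)
    · intro A hA k
      exact hIf _ (shiftSet_finite hA k)
    · intro h
      have := h 0
      rw [shiftSet_zero] at this
      exact hIuniv this
    · intro A hA k m
      exact hId _ _ (shiftSet_shiftSet A k m) (hA (k + m))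
  have hsub : J ⊆ tIdeal I := fun A hA k => hJI (hJt A hA k)
  exact hJmax _ ht hsub
end
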